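/- Let (a_n), (b_n) be sequences of nonnegative reals satisfying the recursion a_{n+1} = r_n a_n + δ_n b_n and b_{n+1} = (r_n − δ_n) b_n, where r_n ≥ 2 and δ_n ∈ {0, 1} for all n. If a_0 = 0 and b_0 > 0, and δ_n = 1 for all n ≥ N, then b_n / (a_n + b_n) → 0 as n → ∞ provided ∑_{n ≥ N} 1/r_n diverges. -/

import Mathlib

/-!
Once `δ_n = 1`, the total population `a_n + b_n` is multiplied by `r_n` and the inside
population by `r_n - 1`, so the inside ratio is multiplied by `1 - 1/r_n ≤ exp (-1/r_n)`.
After `N` the ratio is therefore bounded by a constant times `exp (-∑_{k=N}^{n} 1/r_k)`,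
which tends to `0` because the series diverges.
-/

open Filter Finset

theorem abs_one_sub_inv_le_exp_neg_inv {r : ℝ} (hr : 1 ≤ r) :
    |1 - 1 / r| ≤ Real.exp (-(1 / r)) := by
  have hinv : 1 / r ≤ 1 := by rw [div_le_one (by linarith)]; exact hr
  rw [abs_of_nonneg (by linarith)]
  linarith [Real.add_one_le_exp (-(1 / r))]

theorem abs_le_mul_exp_neg_sum_of_eq_one_sub_inv_mul {q r : ℕ → ℝ} {N : ℕ}
    (hr : ∀ n, N ≤ n → 1 ≤ r n) (hq : ∀ n, N ≤ n → q (n + 1) = (1 - 1 / r n) * q n)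
    {m : ℕ} (hm : N ≤ m) :
    |q (m + 1)| ≤ |q N| * Real.exp (-∑ k ∈ Icc N m, 1 / r k) := by
  induction m, hm using Nat.le_induction with
  | base =>
    rw [Icc_self, sum_singleton, hq N le_rfl, abs_mul, mul_comm]
    exact mul_le_mul_of_nonneg_left (abs_one_sub_inv_le_exp_neg_inv (hr N le_rfl)) (abs_nonneg _)
  | succ m hm ih =>
    calc |q (m + 1 + 1)| = |1 - 1 / r (m + 1)| * |q (m + 1)| := by
          rw [hq (m + 1) (by omega), abs_mul]
      _ ≤ Real.exp (-(1 / r (m + 1))) * (|q N| * Real.exp (-∑ k ∈ Icc N m, 1 / r k)) :=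
          mul_le_mul (abs_one_sub_inv_le_exp_neg_inv (hr _ (by omega))) ih (abs_nonneg _)
            (Real.exp_nonneg _)
      _ = |q N| * Real.exp (-∑ k ∈ Icc N (m + 1), 1 / r k) := by
          rw [sum_Icc_succ_top (by omega), neg_add, Real.exp_add]
          ring

theorem tendsto_zero_of_eq_one_sub_inv_mul {q r : ℕ → ℝ} {N : ℕ}
    (hr : ∀ n, N ≤ n → 1 ≤ r n) (hq : ∀ n, N ≤ n → q (n + 1) = (1 - 1 / r n) * q n)
    (hdiv : Tendsto (fun m => ∑ n ∈ Icc N m, 1 / r n) atTop atTop) :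
    Tendsto q atTop (nhds 0) := by
  rw [← tendsto_add_atTop_iff_nat 1]
  have hbound : Tendsto (fun m => |q N| * Real.exp (-∑ k ∈ Icc N m, 1 / r k)) atTop (nhds 0) := by
    simpa using (Real.tendsto_exp_neg_atTop_nhds_zero.comp hdiv).const_mul |q N|
  refine squeeze_zero_norm' ?_ hbound
  filter_upwards [eventually_ge_atTop N] with m hm
  exact abs_le_mul_exp_neg_sum_of_eq_one_sub_inv_mul hr hq hm

theorem add_succ_eq_mul_add {a b r δ : ℕ → ℝ}
    (hrec_a : ∀ n, a (n + 1) = r n * a n + δ n * b n)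
    (hrec_b : ∀ n, b (n + 1) = (r n - δ n) * b n) (n : ℕ) :
    a (n + 1) + b (n + 1) = r n * (a n + b n) := by
  rw [hrec_a, hrec_b]
  ring

theorem add_pos_of_recurrence {a b r δ : ℕ → ℝ} (hr : ∀ n, 0 < r n)
    (hrec_a : ∀ n, a (n + 1) = r n * a n + δ n * b n)
    (hrec_b : ∀ n, b (n + 1) = (r n - δ n) * b n)
    (h0 : 0 < a 0 + b 0) (n : ℕ) : 0 < a n + b n := by
  induction n with
  | zero => exact h0
  | succ n ih => rw [add_succ_eq_mul_add hrec_a hrec_b]; exact mul_pos (hr n) ih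

theorem inside_ratio_succ_of_eq_one {a b r δ : ℕ → ℝ}
    (hrec_a : ∀ n, a (n + 1) = r n * a n + δ n * b n)
    (hrec_b : ∀ n, b (n + 1) = (r n - δ n) * b n) {n : ℕ}
    (hr : r n ≠ 0) (hs : a n + b n ≠ 0) (hδ : δ n = 1) :
    b (n + 1) / (a (n + 1) + b (n + 1)) = (1 - 1 / r n) * (b n / (a n + b n)) := by
  rw [add_succ_eq_mul_add hrec_a hrec_b, hrec_b, hδ]
  field_simp

theorem inside_ratio_tendsto_zero_general (a b r δ : ℕ → ℝ)
    (hr : ∀ n, 2 ≤ r n)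
    (hrec_a : ∀ n, a (n + 1) = r n * a n + δ n * b n)
    (hrec_b : ∀ n, b (n + 1) = (r n - δ n) * b n)
    (ha0 : a 0 = 0) (hb0 : 0 < b 0)
    (N : ℕ) (hN : ∀ n, N ≤ n → δ n = 1)
    (hdiv : Tendsto (fun m => ∑ n ∈ Finset.Icc N m, 1 / r n) atTop atTop) :
    Tendsto (fun n => b n / (a n + b n)) atTop (nhds 0) := by
  have hr_pos : ∀ n, 0 < r n := fun n => by linarith [hr n]
  have hs_pos : ∀ n, 0 < a n + b n :=
    add_pos_of_recurrence hr_pos hrec_a hrec_b (by rwa [ha0, zero_add])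
  refine tendsto_zero_of_eq_one_sub_inv_mul (fun n _ => by linarith [hr n]) (fun n hn => ?_) hdiv
  exact inside_ratio_succ_of_eq_one hrec_a hrec_b (hr_pos n).ne' (hs_pos n).ne' (hN n hn)

/-- Population dynamics: with `a_{n+1} = r_n a_n + δ_n b_n`, `b_{n+1} = (r_n − δ_n) b_n`,
`r_n ≥ 2`, `δ_n ∈ {0,1}`, `a_0 = 0`, `b_0 > 0`, and `δ_n = 1` for all `n ≥ N`, if
`∑_{n ≥ N} 1/r_n` diverges then `b_n/(a_n + b_n) → 0`. -/
theorem inside_ratio_tendsto_zero (a b r δ : ℕ → ℝ)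
    (ha : ∀ n, 0 ≤ a n) (hb : ∀ n, 0 ≤ b n)
    (hr : ∀ n, 2 ≤ r n) (hδ : ∀ n, δ n = 0 ∨ δ n = 1)
    (hrec_a : ∀ n, a (n + 1) = r n * a n + δ n * b n)
    (hrec_b : ∀ n, b (n + 1) = (r n - δ n) * b n)
    (ha0 : a 0 = 0) (hb0 : 0 < b 0)
    (N : ℕ) (hN : ∀ n, N ≤ n → δ n = 1)
    (hdiv : Tendsto (fun m => ∑ n ∈ Finset.Icc N m, 1 / r n) atTop atTop) :
    Tendsto (fun n => b n / (a n + b n)) atTop (nhds 0) :=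
  inside_ratio_tendsto_zero_general a b r δ hr hrec_a hrec_b ha0 hb0 N hN hdiv
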